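/- arXiv:1010.0380 — 2 statements merged into one kernel-verified Lean document; each statement's English description precedes it below -/
import Mathlib

section
/- Let S and T be operator systems with complete norms and Φ : S → T a unital completely positive surjection. Then Φ is a complete order quotient map if and only if the dual map Φ* : T* → S* is a complete order embedding, i.e., for f ∈ M_n(T*), Φ*_n(f) is completely positive (as a map S → M_n) iff f is completely positive (as a map T → M_n). -/
open scoped TensorProduct Kronecker ComplexOrder Matrix

noncomputable section

/-- Conjugation `α X α*` of an operator-valued matrix by a scalar matrix. -/
def mconj {V : Type} [AddCommGroup V] [Module ℂ V] {m n : Type} [Fintype m]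
    (α : Matrix n m ℂ) (X : Matrix m m V) : Matrix n n V :=
  Matrix.of fun i j => ∑ k, ∑ l, (α i k * star (α j l)) • X k l

/-- Entrywise star (conjugate transpose) of an operator-valued matrix. -/
def mstar {V : Type} [AddCommGroup V] [StarAddMonoid V] {m n : Type}
    (X : Matrix m n V) : Matrix n m V :=
  Matrix.of fun i j => star (X j i)

/-- An abstract operator system: a matrix ordered complex ∗-vector space with an
Archimedean matrix order unit (Choi–Effros). -/
structure OpSys (V : Type) [AddCommGroup V] [Module ℂ V] [StarAddMonoid V]
    [StarModule ℂ V] : Type 1 where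
  pos : ∀ (ι : Type) [Fintype ι] [DecidableEq ι], Set (Matrix ι ι V)
  unit : V
  unit_star : star unit = unit
  pos_star : ∀ (ι : Type) [Fintype ι] [DecidableEq ι] (X : Matrix ι ι V),
    X ∈ pos ι → mstar X = X
  pos_add : ∀ (ι : Type) [Fintype ι] [DecidableEq ι] (X Y : Matrix ι ι V),
    X ∈ pos ι → Y ∈ pos ι → X + Y ∈ pos ι
  pos_conj : ∀ (ι κ : Type) [Fintype ι] [DecidableEq ι] [Fintype κ] [DecidableEq κ]
    (α : Matrix κ ι ℂ) (X : Matrix ι ι V), X ∈ pos ι → mconj α X ∈ pos κ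
  unit_pos : ∀ (ι : Type) [Fintype ι] [DecidableEq ι],
    Matrix.diagonal (fun _ => unit) ∈ pos ι
  archimedean : ∀ (ι : Type) [Fintype ι] [DecidableEq ι] (X : Matrix ι ι V),
    mstar X = X →
    (∀ ε : ℝ, 0 < ε → X + (ε : ℂ) • Matrix.diagonal (fun _ => unit) ∈ pos ι) →
    X ∈ pos ι
  order_unit : ∀ (ι : Type) [Fintype ι] [DecidableEq ι] (X : Matrix ι ι V),
    mstar X = X → ∃ r : ℝ, 0 < r ∧
      (r : ℂ) • Matrix.diagonal (fun _ => unit) - X ∈ pos ι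
  proper : ∀ x : V, Matrix.of (fun _ _ : Fin 1 => x) ∈ pos (Fin 1) →
    Matrix.of (fun _ _ : Fin 1 => -x) ∈ pos (Fin 1) → x = 0

variable {V W : Type}

/-- The matrix norms of an operator system, described as a predicate `‖X‖ ≤ r`,
determined by the order structure via `2×2` block matrices. -/
def OpSys.normLE [AddCommGroup V] [Module ℂ V] [StarAddMonoid V] [StarModule ℂ V]
    (𝒮 : OpSys V) {ι κ : Type} [Fintype ι] [DecidableEq ι] [Fintype κ] [DecidableEq κ]
    (X : Matrix ι κ V) (r : ℝ) : Prop :=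
  Matrix.fromBlocks ((r : ℂ) • Matrix.diagonal (fun _ => 𝒮.unit)) X (mstar X)
    ((r : ℂ) • Matrix.diagonal (fun _ => 𝒮.unit)) ∈ 𝒮.pos (ι ⊕ κ)

/-- The norm of a single element of an operator system. -/
def OpSys.elemNormLE [AddCommGroup V] [Module ℂ V] [StarAddMonoid V] [StarModule ℂ V]
    (𝒮 : OpSys V) (x : V) (r : ℝ) : Prop :=
  𝒮.normLE (Matrix.of fun _ _ : Fin 1 => x) r

/-- Completeness of the norm of an operator system. -/
def OpSys.CompleteNorms [AddCommGroup V] [Module ℂ V] [StarAddMonoid V] [StarModule ℂ V]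
    (𝒮 : OpSys V) : Prop :=
  ∀ u : ℕ → V,
    (∀ ε : ℝ, 0 < ε → ∃ N : ℕ, ∀ p ≥ N, ∀ q ≥ N, 𝒮.elemNormLE (u p - u q) ε) →
    ∃ x : V, ∀ ε : ℝ, 0 < ε → ∃ N : ℕ, ∀ p ≥ N, 𝒮.elemNormLE (u p - x) ε

section Maps

variable [AddCommGroup V] [Module ℂ V] [StarAddMonoid V] [StarModule ℂ V]
variable [AddCommGroup W] [Module ℂ W] [StarAddMonoid W] [StarModule ℂ W]

/-- Completely positive map between operator systems. -/
def IsCPmap (𝒮 : OpSys V) (𝒯 : OpSys W) (Φ : V →ₗ[ℂ] W) : Prop :=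
  ∀ (ι : Type) [Fintype ι] [DecidableEq ι], ∀ X ∈ 𝒮.pos ι, X.map Φ ∈ 𝒯.pos ι

/-- Unital completely positive map between operator systems. -/
def IsUCPmap (𝒮 : OpSys V) (𝒯 : OpSys W) (Φ : V →ₗ[ℂ] W) : Prop :=
  Φ 𝒮.unit = 𝒯.unit ∧ IsCPmap 𝒮 𝒯 Φ

/-- (Unital) complete order embedding between operator systems. -/
def IsCOEmbedding (𝒮 : OpSys V) (𝒯 : OpSys W) (Φ : V →ₗ[ℂ] W) : Prop :=
  Φ 𝒮.unit = 𝒯.unit ∧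
  ∀ (ι : Type) [Fintype ι] [DecidableEq ι], ∀ X : Matrix ι ι V,
    X ∈ 𝒮.pos ι ↔ X.map Φ ∈ 𝒯.pos ι

/-- Complete order quotient map between operator systems: a unital completely positive
surjection such that every positive `Q` admits, for every `ε > 0`, a lift `P` with
`P + ε Iₙ ⊗ 1` positive. -/
def IsCOQuotientMap (𝒮 : OpSys V) (𝒯 : OpSys W) (Φ : V →ₗ[ℂ] W) : Prop :=
  IsUCPmap 𝒮 𝒯 Φ ∧ Function.Surjective Φ ∧
  ∀ (ι : Type) [Fintype ι] [DecidableEq ι], ∀ Q ∈ 𝒯.pos ι, ∀ ε : ℝ, 0 < ε →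
    ∃ P : Matrix ι ι V,
      P + (ε : ℂ) • Matrix.diagonal (fun _ => 𝒮.unit) ∈ 𝒮.pos ι ∧ P.map Φ = Q

end Maps

section Tensor

variable [AddCommGroup V] [Module ℂ V] [AddCommGroup W] [Module ℂ W]

/-- Elementary tensor of operator-valued matrices. -/
def tkron {ι κ : Type} (P : Matrix ι ι V) (Q : Matrix κ κ W) :
    Matrix (ι × κ) (ι × κ) (V ⊗[ℂ] W) :=
  Matrix.of fun p q => P p.1 q.1 ⊗ₜ[ℂ] Q p.2 q.2

/-- The cone `D_n^{max}` : all `α (P ⊗ Q) α*`. -/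
def Dmax (posV : ∀ (ι : Type) [Fintype ι] [DecidableEq ι], Set (Matrix ι ι V))
    (posW : ∀ (ι : Type) [Fintype ι] [DecidableEq ι], Set (Matrix ι ι W))
    (ι : Type) [Fintype ι] [DecidableEq ι] : Set (Matrix ι ι (V ⊗[ℂ] W)) :=
  { Z | ∃ (k l : ℕ) (P : Matrix (Fin k) (Fin k) V) (Q : Matrix (Fin l) (Fin l) W)
      (α : Matrix ι (Fin k × Fin l) ℂ),
      P ∈ posV (Fin k) ∧ Q ∈ posW (Fin l) ∧ Z = mconj α (tkron P Q) }

/-- The positive cones of the maximal operator system tensor product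
(the Archimedeanization of `D^{max}`). -/
def maxPos (posV : ∀ (ι : Type) [Fintype ι] [DecidableEq ι], Set (Matrix ι ι V)) (uV : V)
    (posW : ∀ (ι : Type) [Fintype ι] [DecidableEq ι], Set (Matrix ι ι W)) (uW : W)
    (ι : Type) [Fintype ι] [DecidableEq ι] : Set (Matrix ι ι (V ⊗[ℂ] W)) :=
  { Z | ∀ ε : ℝ, 0 < ε →
      Z + (ε : ℂ) • Matrix.diagonal (fun _ => uV ⊗ₜ[ℂ] uW) ∈ Dmax posV posW ι }

/-- The ground level positive cone of the maximal tensor product. -/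
def maxPos1 (posV : ∀ (ι : Type) [Fintype ι] [DecidableEq ι], Set (Matrix ι ι V)) (uV : V)
    (posW : ∀ (ι : Type) [Fintype ι] [DecidableEq ι], Set (Matrix ι ι W)) (uW : W) :
    Set (V ⊗[ℂ] W) :=
  { z | Matrix.of (fun _ _ : Fin 1 => z) ∈ maxPos posV uV posW uW (Fin 1) }

end Tensor

/-- Positivity in matrix algebras over a (C*-)algebra: elements of the form `Y* Y`. -/
def cstarPos {A : Type} [Ring A] [StarRing A] (ι : Type) [Fintype ι] :
    Set (Matrix ι ι A) :=
  { X | ∃ Y : Matrix ι ι A, X = Yᴴ * Y }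

/-- The dual space of an operator system. -/
abbrev DualV (V : Type) [AddCommGroup V] [Module ℂ V] := V →ₗ[ℂ] ℂ

/-- The double dual space. -/
abbrev BiDual (V : Type) [AddCommGroup V] [Module ℂ V] := DualV (DualV V)

section Dual

variable [AddCommGroup V] [Module ℂ V]

/-- Pairing of a matrix of functionals with an operator-valued matrix. -/
def ampMat {ι κ m : Type} (f : Matrix ι κ (DualV V)) (X : Matrix m m V) :
    Matrix (m × ι) (m × κ) ℂ :=
  Matrix.of fun p q => f p.2 q.2 (X p.1 q.1)

/-- The matrix ordering on the dual space: `Mₙ(S*)⁺ = CP(S, Mₙ)`. -/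
def dualPos (posV : ∀ (ι : Type) [Fintype ι] [DecidableEq ι], Set (Matrix ι ι V))
    (ι : Type) [Fintype ι] [DecidableEq ι] : Set (Matrix ι ι (DualV V)) :=
  { f | ∀ (m : Type) [Fintype m] [DecidableEq m], ∀ X ∈ posV m, (ampMat f X).PosSemidef }

/-- The matrix ordering on the double dual. -/
def bidualPos (posV : ∀ (ι : Type) [Fintype ι] [DecidableEq ι], Set (Matrix ι ι V))
    (ι : Type) [Fintype ι] [DecidableEq ι] : Set (Matrix ι ι (BiDual V)) :=
  { F | ∀ (κ : Type) [Fintype κ] [DecidableEq κ], ∀ f ∈ dualPos posV κ,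
      (Matrix.of fun (p q : ι × κ) => F p.1 q.1 (f p.2 q.2)).PosSemidef }

end Dual

/-- `‖M‖ ≤ r` for scalar matrices, via positivity of a `2×2` block matrix. -/
def cNormLE {ι κ : Type} [Fintype ι] [DecidableEq ι] [Fintype κ] [DecidableEq κ]
    (M : Matrix ι κ ℂ) (r : ℝ) : Prop :=
  (Matrix.fromBlocks ((r : ℂ) • 1) M Mᴴ ((r : ℂ) • 1)).PosSemidef

section DualNorm

/-- The matrix norm data of an operator system, in partially applicable form. -/
def OpSys.normData [AddCommGroup V] [Module ℂ V] [StarAddMonoid V] [StarModule ℂ V]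
    (𝒮 : OpSys V) (ι κ : Type) [Fintype ι] [DecidableEq ι] [Fintype κ] [DecidableEq κ] :
    Matrix ι κ V → ℝ → Prop :=
  fun X r => 𝒮.normLE X r

/-- The matrix cones of matrices over a C*-algebra, in partially applicable form. -/
def cstarPosData (A : Type) [Ring A] [StarRing A]
    (ι : Type) [Fintype ι] [DecidableEq ι] : Set (Matrix ι ι A) :=
  cstarPos ι

/-- The completely bounded norm (as a predicate `‖f‖_cb ≤ r`) on matrices over the
dual of a space with matrix norm data `normV`; this is the operator space dual
matrix norm. -/
def dualNormLE [AddCommGroup V] [Module ℂ V]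
    (normV : ∀ (ι κ : Type) [Fintype ι] [DecidableEq ι] [Fintype κ] [DecidableEq κ],
      Matrix ι κ V → ℝ → Prop)
    (ι κ : Type) [Fintype ι] [DecidableEq ι] [Fintype κ] [DecidableEq κ]
    (f : Matrix ι κ (DualV V)) (r : ℝ) : Prop :=
  ∀ (m : Type) [Fintype m] [DecidableEq m], ∀ X : Matrix m m V,
    normV m m X 1 → cNormLE (ampMat f X) r

end DualNorm

section Werner

variable {U : Type} [AddCommGroup U] [Module ℂ U]

/-- Werner's unitization cone on `U ⊕ ℂ` for a matrix ordered operator space `U`,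
given by the matrix cones `posU` and matrix norms `normU` of `U` :
`X + A ∈ Mₙ(Ũ)⁺` iff `A ∈ Mₙ⁺` and
`φ((A+εIₙ)^{-1/2} X (A+εIₙ)^{-1/2}) ≥ -1` for every `ε > 0` and every positive
contractive functional `φ` on `Mₙ(U)`. -/
def wernerPos (posU : ∀ (ι : Type) [Fintype ι] [DecidableEq ι], Set (Matrix ι ι U))
    (normU : ∀ (ι κ : Type) [Fintype ι] [DecidableEq ι] [Fintype κ] [DecidableEq κ],
      Matrix ι κ U → ℝ → Prop)
    (ι : Type) [Fintype ι] [DecidableEq ι] : Set (Matrix ι ι (U × ℂ)) :=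
  { X | (Matrix.of fun i j => (X i j).2).PosSemidef ∧
      ∀ ε : ℝ, 0 < ε → ∀ B : Matrix ι ι ℂ, B.PosDef →
        B * B = Matrix.of (fun i j => (X i j).2) + (ε : ℂ) • 1 →
        ∀ φ : Matrix ι ι U →ₗ[ℂ] ℂ,
          (∀ g ∈ posU ι, 0 ≤ (φ g).re ∧ (φ g).im = 0) →
          (∀ (g : Matrix ι ι U) (r : ℝ), 0 ≤ r → normU ι ι g r → ‖φ g‖ ≤ r) →
          -1 ≤ (φ (mconj B⁻¹ (Matrix.of fun i j => (X i j).1))).re }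

end Werner

section MatrixMaps

variable [AddCommGroup V] [Module ℂ V] [AddCommGroup W] [Module ℂ W]

/-- Amplification of a matrix-algebra valued map evaluated on an operator matrix. -/
def blkMat {p : Type} (φ : V →ₗ[ℂ] Matrix p p ℂ) {ι : Type} (X : Matrix ι ι V) :
    Matrix (ι × p) (ι × p) ℂ :=
  Matrix.of fun q r => φ (X q.1 r.1) q.2 r.2

/-- Unital completely positive map into a matrix algebra, for raw matrix-cone data. -/
def UCPtoM {R : Type} [AddCommGroup R] [Module ℂ R]
    (posR : ∀ (ι : Type) [Fintype ι] [DecidableEq ι], Set (Matrix ι ι R)) (uR : R)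
    {p : Type} [Fintype p] [DecidableEq p] (φ : R →ₗ[ℂ] Matrix p p ℂ) : Prop :=
  φ uR = 1 ∧ ∀ (ι : Type) [Fintype ι] [DecidableEq ι], ∀ X ∈ posR ι, (blkMat φ X).PosSemidef

/-- Completely positive map from a matrix algebra into matrix-cone data. -/
def CPfromM {p : Type} [Fintype p] [DecidableEq p]
    (posW : ∀ (ι : Type) [Fintype ι] [DecidableEq ι], Set (Matrix ι ι W))
    (ψ : Matrix p p ℂ →ₗ[ℂ] W) : Prop :=
  ∀ (ι : Type) [Fintype ι] [DecidableEq ι] (B : Matrix ι ι (Matrix p p ℂ)),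
    (Matrix.of fun (q r : ι × p) => B q.1 r.1 q.2 r.2).PosSemidef →
    (Matrix.of fun i j => ψ (B i j)) ∈ posW ι

/-- The pairing `φ ⊗ ψ : V ⊗ W → M_{p×q}` associated with matrix-algebra valued maps. -/
def kronPair {p q : Type} [Fintype p] [DecidableEq p] [Fintype q] [DecidableEq q]
    (φ : V →ₗ[ℂ] Matrix p p ℂ) (ψ : W →ₗ[ℂ] Matrix q q ℂ) :
    V ⊗[ℂ] W →ₗ[ℂ] Matrix (p × q) (p × q) ℂ :=
  TensorProduct.lift
    (LinearMap.mk₂ ℂ (fun v w => φ v ⊗ₖ ψ w)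
      (fun v v' w => by simp [map_add, Matrix.add_kronecker])
      (fun c v w => by simp [map_smul, Matrix.smul_kronecker])
      (fun v w w' => by simp [map_add, Matrix.kronecker_add])
      (fun c v w => by simp [map_smul, Matrix.kronecker_smul]))

/-- The ground level positive cone of the minimal operator system tensor product. -/
def minPos1 (posV : ∀ (ι : Type) [Fintype ι] [DecidableEq ι], Set (Matrix ι ι V)) (uV : V)
    (posW : ∀ (ι : Type) [Fintype ι] [DecidableEq ι], Set (Matrix ι ι W)) (uW : W) :
    Set (V ⊗[ℂ] W) :=
  { z | ∀ (k m : ℕ) (φ : V →ₗ[ℂ] Matrix (Fin k) (Fin k) ℂ)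
      (ψ : W →ₗ[ℂ] Matrix (Fin m) (Fin m) ℂ),
      UCPtoM posV uV φ → UCPtoM posW uW ψ → (kronPair φ ψ z).PosSemidef }

/-- The matrix level positive cones of the minimal operator system tensor product. -/
def minPosMat (posV : ∀ (ι : Type) [Fintype ι] [DecidableEq ι], Set (Matrix ι ι V)) (uV : V)
    (posW : ∀ (ι : Type) [Fintype ι] [DecidableEq ι], Set (Matrix ι ι W)) (uW : W)
    (ι : Type) [Fintype ι] [DecidableEq ι] : Set (Matrix ι ι (V ⊗[ℂ] W)) :=
  { Z | ∀ (k m : ℕ) (φ : V →ₗ[ℂ] Matrix (Fin k) (Fin k) ℂ)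
      (ψ : W →ₗ[ℂ] Matrix (Fin m) (Fin m) ℂ),
      UCPtoM posV uV φ → UCPtoM posW uW ψ →
      (Matrix.of fun (q r : ι × (Fin k × Fin m)) =>
        kronPair φ ψ (Z q.1 r.1) q.2 r.2).PosSemidef }

/-- The entry functionals of a matrix-algebra valued map. -/
def entryF {p : Type} (f : V →ₗ[ℂ] Matrix p p ℂ) (i j : p) : DualV V where
  toFun x := f x i j
  map_add' x y := by simp [map_add, Matrix.add_apply]
  map_smul' c x := by simp [map_smul, Matrix.smul_apply]

/-- Conjugation of a matrix-algebra valued map by a fixed scalar matrix. -/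
def conjMap {p : Type} [Fintype p] (B : Matrix p p ℂ) (f : V →ₗ[ℂ] Matrix p p ℂ) :
    V →ₗ[ℂ] Matrix p p ℂ where
  toFun x := B * f x * B
  map_add' x y := by simp [map_add, Matrix.mul_add, Matrix.add_mul]
  map_smul' c x := by simp [map_smul, Matrix.mul_smul, Matrix.smul_mul]

end MatrixMaps

/-- The weak expectation property, for raw matrix-cone data `(posV, uV)` on `V` :
the canonical inclusion into the bidual factors through some `B(H)`
(`H = ℓ²(Λ)`) by unital completely positive maps. -/
def HasWEP {V : Type} [AddCommGroup V] [Module ℂ V]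
    (posV : ∀ (ι : Type) [Fintype ι] [DecidableEq ι], Set (Matrix ι ι V)) (uV : V) : Prop :=
  ∃ (Λ : Type) (Φ : V →ₗ[ℂ] ((lp (fun _ : Λ => ℂ) 2) →L[ℂ] (lp (fun _ : Λ => ℂ) 2)))
    (Ψ : ((lp (fun _ : Λ => ℂ) 2) →L[ℂ] (lp (fun _ : Λ => ℂ) 2)) →ₗ[ℂ] BiDual V),
    Φ uV = 1 ∧
    (∀ (ι : Type) [Fintype ι] [DecidableEq ι], ∀ X ∈ posV ι, X.map Φ ∈ cstarPos ι) ∧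
    Ψ 1 = Module.Dual.eval ℂ V uV ∧
    (∀ (ι : Type) [Fintype ι] [DecidableEq ι],
      ∀ Y ∈ cstarPos (A := (lp (fun _ : Λ => ℂ) 2) →L[ℂ] (lp (fun _ : Λ => ℂ) 2)) ι,
        Y.map Ψ ∈ bidualPos posV ι) ∧
    (∀ x : V, Ψ (Φ x) = Module.Dual.eval ℂ V x)

end

/-!
If `Φ` is a complete order quotient map, every positive `Q ∈ Mₙ(T)` lifts to `P` with
`P + ε·1 ≥ 0`, and then `f(Q) + ε·(Φ*f)(1) = (Φ*f)(P + ε·1) ≥ 0` for all `ε > 0`; hence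
`f(Q) ≥ 0` as soon as `Φ*ₙ(f)` is completely positive.

Conversely, suppose a positive `Q` has no such lift for some `ε > 0`. The matrices whose real
part lifts to some `P` with `P + ε·1 ≥ 0` form a convex set, which is absorbing because `Φ` is
surjective and `1` is an Archimedean order unit. The algebraic Hahn–Banach theorem separates `Q`
from it by a real functional `μ`, and since `τP - ε·1` is an admissible lift for every `P ≥ 0`
and `τ > 0`, `μ` is nonpositive on `Φₙ(Mₙ(S)⁺)`. The Hermitian complexification of `-μ`, read as
an element `f ∈ Mₙ(T*)`, has `Φ*ₙ(f)` completely positive but `f(Q) < 0`.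
-/

open ComplexStarModule Filter Topology

lemma LinearMap.map_star_of_isSelfAdjoint {A B : Type}
    [AddCommGroup A] [Module ℂ A] [StarAddMonoid A] [StarModule ℂ A]
    [AddCommGroup B] [Module ℂ B] [StarAddMonoid B] [StarModule ℂ B] (f : A →ₗ[ℂ] B)
    (hf : ∀ a, IsSelfAdjoint a → IsSelfAdjoint (f a)) (a : A) :
    f (star a) = star (f a) := by
  conv_lhs => rw [← realPart_add_I_smul_imaginaryPart a]
  conv_rhs => rw [← realPart_add_I_smul_imaginaryPart a]
  simp only [star_add, star_smul, map_add, map_smul, (ℜ a).2.star_eq, (ℑ a).2.star_eq,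
    (hf _ (ℜ a).2).star_eq, (hf _ (ℑ a).2).star_eq, Complex.star_def, Complex.conj_I]

lemma exists_hermitian_extension {A : Type}
    [AddCommGroup A] [Module ℂ A] [StarAddMonoid A] [StarModule ℂ A] (μ : A →ₗ[ℝ] ℝ) :
    ∃ L : A →ₗ[ℂ] ℂ, (∀ a, L (star a) = star (L a)) ∧ ∀ a, IsSelfAdjoint a → L a = μ a := by
  set μ' : A →ₗ[ℝ] ℝ := μ ∘ₗ (selfAdjoint.submodule ℝ A).subtype ∘ₗ realPart
  have hμ' (a : A) : μ' a = μ (ℜ a) := rfl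
  have hre (a : A) : ℜ (star a) = ℜ a := Subtype.ext <| by simp [realPart_apply_coe, add_comm]
  have him (a : A) : ℑ (star a) = -ℑ a := Subtype.ext <| by
    simp [imaginaryPart_apply_coe, ← smul_neg]
  refine ⟨Module.Dual.extendRCLike μ', fun a => ?_, fun a ha => ?_⟩
  · simp [Module.Dual.extendRCLike_apply, hμ', hre, him, Complex.ext_iff]
  · simp [Module.Dual.extendRCLike_apply, hμ', ha.imaginaryPart, ha.coe_realPart]

/-- Extend `t • x ↦ t * gauge C x`, which is dominated by the sublinear functional `gauge C`. -/
lemma Convex.exists_linearMap_le_one_le_of_notMem {E : Type*} [AddCommGroup E] [Module ℝ E]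
    {C : Set E} (hconv : Convex ℝ C) (habs : Absorbent ℝ C) {x : E} (hx : x ∉ C) :
    ∃ f : E →ₗ[ℝ] ℝ, (∀ y ∈ C, f y ≤ 1) ∧ 1 ≤ f x := by
  have h0 : (0 : E) ∈ C := habs.zero_mem
  have hx0 : x ≠ 0 := fun h => hx (h ▸ h0)
  have hgauge : 1 ≤ gauge C x :=
    not_lt.1 fun h => hx (setOfPred_gauge_lt_one_subset_self hconv h0 habs h)
  obtain ⟨f, hfx, hf⟩ := exists_extension_of_le_sublinear
    (LinearPMap.mkSpanSingleton x (gauge C x) hx0) (gauge C)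
    (fun c hc y => gauge_smul_of_nonneg hc.le y) (gauge_add_le hconv habs)
    (by
      rintro ⟨y, hy⟩
      obtain ⟨c, rfl⟩ := Submodule.mem_span_singleton.1 hy
      rw [LinearPMap.mkSpanSingleton'_apply, smul_eq_mul]
      rcases le_or_gt 0 c with hc | hc
      · exact (gauge_smul_of_nonneg hc x).ge
      · exact (mul_nonpos_of_nonpos_of_nonneg hc.le (gauge_nonneg _)).trans (gauge_nonneg _))
  refine ⟨f, fun y hy => (hf y).trans (gauge_le_one_of_mem hy), ?_⟩
  rwa [hfx ⟨x, Submodule.mem_span_singleton_self x⟩, LinearPMap.mkSpanSingleton_apply]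

lemma Matrix.PosSemidef.of_forall_add_smul {n : Type} [Fintype n] {A B : Matrix n n ℂ}
    (hB : B.PosSemidef) (h : ∀ ε : ℝ, 0 < ε → (A + (ε : ℂ) • B).PosSemidef) : A.PosSemidef := by
  rw [Matrix.posSemidef_iff_dotProduct_mulVec]
  refine ⟨by simpa using (h 1 one_pos).1.sub hB.1, fun x => ?_⟩
  have hlim : Tendsto (fun ε : ℝ => star x ⬝ᵥ (A + (ε : ℂ) • B) *ᵥ x) (𝓝[>] 0)
      (𝓝 (star x ⬝ᵥ A *ᵥ x)) := by
    simp only [Matrix.add_mulVec, Matrix.smul_mulVec, dotProduct_add, dotProduct_smul,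
      smul_eq_mul]
    refine Tendsto.mono_left ?_ nhdsWithin_le_nhds
    exact (continuous_const.add (Complex.continuous_ofReal.mul continuous_const)).tendsto' _ _
      (by simp)
  exact ge_of_tendsto hlim (eventually_nhdsWithin_of_forall fun ε hε =>
    (h ε hε).dotProduct_mulVec_nonneg x)

lemma mstar_eq_conjTranspose {V : Type} [AddCommGroup V] [StarAddMonoid V] {m n : Type}
    (X : Matrix m n V) : mstar X = Xᴴ := rfl

section Conjugation

variable {V : Type} [AddCommGroup V] [Module ℂ V]

lemma mconj_one {m : Type} [Fintype m] [DecidableEq m] (X : Matrix m m V) :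
    mconj (1 : Matrix m m ℂ) X = X := by
  ext i j
  simp [mconj, Matrix.one_apply, ite_smul, apply_ite (star : ℂ → ℂ), mul_ite]

lemma mconj_smul {m n : Type} [Fintype m] (c : ℂ) (α : Matrix n m ℂ) (X : Matrix m m V) :
    mconj (c • α) X = (c * star c) • mconj α X := by
  ext i j
  simp only [mconj, Matrix.of_apply, Matrix.smul_apply, Finset.smul_sum, smul_smul, star_mul',
    smul_eq_mul]
  congr! 3
  ring

lemma mconj_map {W : Type} [AddCommGroup W] [Module ℂ W] (Φ : V →ₗ[ℂ] W) {m n : Type}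
    [Fintype m] (α : Matrix n m ℂ) (X : Matrix m m V) :
    (mconj α X).map Φ = mconj α (X.map Φ) := by
  ext i j
  simp [mconj, map_sum, map_smul]

end Conjugation

namespace OpSys

variable {V : Type} [AddCommGroup V] [Module ℂ V] [StarAddMonoid V] [StarModule ℂ V]
variable (𝒮 : OpSys V) {ι : Type} [Fintype ι] [DecidableEq ι]

lemma isSelfAdjoint_of_mem_pos {X : Matrix ι ι V} (hX : X ∈ 𝒮.pos ι) : IsSelfAdjoint X :=
  𝒮.pos_star ι X hX

lemma isSelfAdjoint_of_add_unit_smul_mem_pos {X : Matrix ι ι V} {ε : ℝ}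
    (h : X + (ε : ℂ) • Matrix.diagonal (fun _ => 𝒮.unit) ∈ 𝒮.pos ι) : IsSelfAdjoint X := by
  have hε : IsSelfAdjoint (ε : ℂ) := Complex.conj_ofReal ε
  simpa using (𝒮.isSelfAdjoint_of_mem_pos h).sub
    (hε.smul (𝒮.isSelfAdjoint_of_mem_pos (𝒮.unit_pos ι)))

lemma smul_mem_pos {t : ℝ} (ht : 0 ≤ t) {X : Matrix ι ι V} (hX : X ∈ 𝒮.pos ι) :
    (t : ℂ) • X ∈ 𝒮.pos ι := by
  have h := 𝒮.pos_conj ι ι ((Real.sqrt t : ℂ) • 1) X hX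
  rwa [mconj_smul, mconj_one, Complex.star_def, Complex.conj_ofReal, ← Complex.ofReal_mul,
    Real.mul_self_sqrt ht] at h

lemma convex_pos : Convex ℝ (𝒮.pos ι) := by
  intro X hX Y hY a b ha hb _
  exact 𝒮.pos_add ι _ _ (𝒮.smul_mem_pos ha hX) (𝒮.smul_mem_pos hb hY)

lemma add_unit_smul_mem_pos_of_le {X : Matrix ι ι V} {r R : ℝ}
    (hX : X + (r : ℂ) • Matrix.diagonal (fun _ => 𝒮.unit) ∈ 𝒮.pos ι) (hrR : r ≤ R) :
    X + (R : ℂ) • Matrix.diagonal (fun _ => 𝒮.unit) ∈ 𝒮.pos ι := by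
  have h := 𝒮.pos_add ι _ _ hX (𝒮.smul_mem_pos (sub_nonneg.2 hrR) (𝒮.unit_pos ι))
  rwa [add_assoc, ← add_smul, ← Complex.ofReal_add, add_sub_cancel] at h

/-- The sign `σ = ±1` encodes `-r·1 ≤ X ≤ r·1`. -/
lemma exists_sign_smul_add_unit_smul_mem_pos {X : Matrix ι ι V} (hX : IsSelfAdjoint X) :
    ∃ r : ℝ, 0 < r ∧ ∀ σ : ℝ, |σ| = 1 →
      (σ : ℂ) • X + (r : ℂ) • Matrix.diagonal (fun _ => 𝒮.unit) ∈ 𝒮.pos ι := by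
  obtain ⟨r₁, hr₁, h₁⟩ := 𝒮.order_unit ι X hX
  obtain ⟨r₂, hr₂, h₂⟩ := 𝒮.order_unit ι (-X) hX.neg.star_eq
  refine ⟨max r₁ r₂, lt_max_of_lt_left hr₁, fun σ hσ => ?_⟩
  rcases abs_eq (zero_le_one' ℝ) |>.1 hσ with rfl | rfl
  · rw [sub_neg_eq_add, add_comm] at h₂
    simpa using 𝒮.add_unit_smul_mem_pos_of_le h₂ (le_max_right r₁ r₂)
  · rw [sub_eq_neg_add] at h₁
    simpa using 𝒮.add_unit_smul_mem_pos_of_le h₁ (le_max_left r₁ r₂)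

lemma eventually_smul_add_unit_smul_mem_pos {X : Matrix ι ι V} (hX : IsSelfAdjoint X)
    {ε : ℝ} (hε : 0 < ε) :
    ∀ᶠ s : ℝ in 𝓝 0,
      (s : ℂ) • X + (ε : ℂ) • Matrix.diagonal (fun _ => 𝒮.unit) ∈ 𝒮.pos ι := by
  obtain ⟨r, hr, hX⟩ := 𝒮.exists_sign_smul_add_unit_smul_mem_pos hX
  filter_upwards [eventually_abs_sub_lt 0 (div_pos hε hr)] with s hs
  rw [sub_zero, lt_div_iff₀ hr] at hs
  rcases eq_or_ne s 0 with rfl | hs0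
  · simpa using 𝒮.smul_mem_pos hε.le (𝒮.unit_pos ι)
  have h := 𝒮.smul_mem_pos (abs_nonneg s) (hX (s / |s|) (by simp [abs_div, hs0]))
  rw [smul_add, smul_smul, smul_smul, ← Complex.ofReal_mul, ← Complex.ofReal_mul,
    mul_div_cancel₀ _ (abs_ne_zero.2 hs0)] at h
  exact 𝒮.add_unit_smul_mem_pos_of_le h hs.le

end OpSys

namespace IsCPmap

variable {V W : Type}
variable [AddCommGroup V] [Module ℂ V] [StarAddMonoid V] [StarModule ℂ V]
variable [AddCommGroup W] [Module ℂ W] [StarAddMonoid W] [StarModule ℂ W]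
variable {𝒮 : OpSys V} {𝒯 : OpSys W} {Φ : V →ₗ[ℂ] W}

lemma isSelfAdjoint_map (hΦ : IsCPmap 𝒮 𝒯 Φ) {ι : Type} [Fintype ι] [DecidableEq ι]
    {X : Matrix ι ι V} (hX : IsSelfAdjoint X) : IsSelfAdjoint (X.map Φ) := by
  obtain ⟨r, hr₀, hr⟩ := 𝒮.order_unit ι X hX
  have h := (𝒯.isSelfAdjoint_of_mem_pos (hΦ ι _ (𝒮.smul_mem_pos hr₀.le (𝒮.unit_pos ι)))).sub
    (𝒯.isSelfAdjoint_of_mem_pos (hΦ ι _ hr))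
  rwa [← Matrix.map_sub _ (map_sub Φ), sub_sub_cancel] at h

lemma map_star (hΦ : IsCPmap 𝒮 𝒯 Φ) (v : V) : Φ (star v) = star (Φ v) := by
  refine Φ.map_star_of_isSelfAdjoint (fun a ha => ?_) v
  have h := hΦ.isSelfAdjoint_map (Matrix.isHermitian_diagonal_of_self_adjoint
    (fun _ : Fin 1 => a) (Pi.isSelfAdjoint.2 fun _ => ha))
  rw [Matrix.diagonal_map (map_zero Φ)] at h
  exact Matrix.isHermitian_diagonal_iff.1 h 0

lemma map_realPart (hΦ : IsCPmap 𝒮 𝒯 Φ) {ι : Type} (X : Matrix ι ι V) :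
    (ℜ X : Matrix ι ι V).map Φ = ℜ (X.map Φ) := by
  ext i j
  simp [realPart_apply_coe, hΦ.map_star, LinearMap.map_smul_of_tower]

end IsCPmap

lemma ampMat_comp {V W : Type} [AddCommGroup V] [Module ℂ V] [AddCommGroup W] [Module ℂ W]
    (Φ : V →ₗ[ℂ] W) {ι m : Type} (f : Matrix ι ι (DualV W)) (X : Matrix m m V) :
    ampMat (Matrix.of fun i j => (f i j).comp Φ) X = ampMat f (X.map Φ) := rfl
section EntryFunctionals

variable {W : Type} [AddCommGroup W] [Module ℂ W]
variable {ι m : Type} [DecidableEq ι]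

/-- The element of `Mₙ(W*)` corresponding to a functional on `Mₙ(W)`. -/
def entryFunctionals (L : Matrix ι ι W →ₗ[ℂ] ℂ) : Matrix ι ι (DualV W) :=
  Matrix.of fun i j => L ∘ₗ Matrix.singleLinearMap ℂ i j

lemma ampMat_entryFunctionals (L : Matrix ι ι W →ₗ[ℂ] ℂ) (Y : Matrix m m W) :
    ampMat (entryFunctionals L) Y =
      Matrix.of fun p q : m × ι => L (Matrix.single p.2 q.2 (Y p.1 q.1)) := rfl

lemma mconj_eq_sum_single [Fintype ι] [Fintype m] (Y : Matrix m m W) (ξ : m × ι → ℂ) :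
    mconj (Matrix.of fun i k => star (ξ (k, i))) Y =
      ∑ p : m × ι, ∑ q : m × ι, (star (ξ p) * ξ q) • Matrix.single p.2 q.2 (Y p.1 q.1) := by
  ext a b
  simp only [mconj, Matrix.of_apply, Matrix.sum_apply, Matrix.smul_apply, Matrix.single,
    Fintype.sum_prod_type, smul_ite, smul_zero, ite_and, star_star, Finset.sum_ite_irrel,
    Finset.sum_const_zero, Finset.sum_ite_eq', Finset.mem_univ, if_true]

lemma dotProduct_ampMat_entryFunctionals_mulVec [Fintype ι] [Fintype m]
    (L : Matrix ι ι W →ₗ[ℂ] ℂ) (Y : Matrix m m W) (ξ : m × ι → ℂ) :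
    star ξ ⬝ᵥ ampMat (entryFunctionals L) Y *ᵥ ξ =
      L (mconj (Matrix.of fun i k => star (ξ (k, i))) Y) := by
  simp only [mconj_eq_sum_single, map_sum, map_smul, smul_eq_mul, ampMat_entryFunctionals,
    dotProduct, Matrix.mulVec, Matrix.of_apply, Pi.star_apply, Finset.mul_sum]
  exact Finset.sum_congr rfl fun p _ => Finset.sum_congr rfl fun q _ => by ring

lemma apply_nonneg_of_posSemidef_ampMat_entryFunctionals [Fintype ι]
    {L : Matrix ι ι W →ₗ[ℂ] ℂ} {Y : Matrix ι ι W}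
    (h : (ampMat (entryFunctionals L) Y).PosSemidef) : 0 ≤ L Y := by
  have hξ := h.dotProduct_mulVec_nonneg fun p => if p.1 = p.2 then 1 else 0
  rwa [dotProduct_ampMat_entryFunctionals_mulVec, show (Matrix.of fun i k : ι =>
    star (if (k, i).1 = (k, i).2 then (1 : ℂ) else 0)) = 1 by
      ext i k; simp [Matrix.one_apply, eq_comm], mconj_one] at hξ

variable [StarAddMonoid W]

lemma isHermitian_ampMat_entryFunctionals {L : Matrix ι ι W →ₗ[ℂ] ℂ}
    (hL : ∀ Z, L (star Z) = star (L Z)) {Y : Matrix m m W} (hY : IsSelfAdjoint Y) :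
    (ampMat (entryFunctionals L) Y).IsHermitian := by
  ext p q
  simp only [ampMat_entryFunctionals, Matrix.conjTranspose_apply, Matrix.of_apply, ← hL,
    Matrix.star_eq_conjTranspose, Matrix.conjTranspose_single]
  rw [← Matrix.conjTranspose_apply, ← Matrix.star_eq_conjTranspose, hY.star_eq]

lemma posSemidef_ampMat_entryFunctionals [Fintype ι] [Fintype m] {L : Matrix ι ι W →ₗ[ℂ] ℂ}
    (hL : ∀ Z, L (star Z) = star (L Z)) {Y : Matrix m m W} (hY : IsSelfAdjoint Y)
    (h : ∀ α : Matrix ι m ℂ, 0 ≤ L (mconj α Y)) :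
    (ampMat (entryFunctionals L) Y).PosSemidef :=
  Matrix.posSemidef_iff_dotProduct_mulVec.2 ⟨isHermitian_ampMat_entryFunctionals hL hY,
    fun ξ => (dotProduct_ampMat_entryFunctionals_mulVec L Y ξ).symm ▸ h _⟩

end EntryFunctionals

section Lifts

variable {V W : Type}
variable [AddCommGroup V] [Module ℂ V] [StarAddMonoid V] [StarModule ℂ V]
variable [AddCommGroup W] [Module ℂ W] [StarAddMonoid W] [StarModule ℂ W]
variable {𝒮 : OpSys V} {𝒯 : OpSys W} {Φ : V →ₗ[ℂ] W}
variable {ι : Type} [Fintype ι] [DecidableEq ι]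

variable (𝒮 Φ ι) in
def realLiftSet (ε : ℝ) : Set (Matrix ι ι W) :=
  {Z | ∃ P : Matrix ι ι V,
    P + (ε : ℂ) • Matrix.diagonal (fun _ => 𝒮.unit) ∈ 𝒮.pos ι ∧ P.map Φ = ℜ Z}

lemma mem_realLiftSet_iff {ε : ℝ} {Z : Matrix ι ι W} (hZ : IsSelfAdjoint Z) :
    Z ∈ realLiftSet 𝒮 Φ ι ε ↔
      ∃ P, P + (ε : ℂ) • Matrix.diagonal (fun _ => 𝒮.unit) ∈ 𝒮.pos ι ∧ P.map Φ = Z := by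
  rw [realLiftSet, Set.mem_ofPred_eq, hZ.coe_realPart]

variable (𝒮 Φ ι) in
lemma convex_realLiftSet (ε : ℝ) : Convex ℝ (realLiftSet 𝒮 Φ ι ε) := by
  rintro Z₁ ⟨P₁, hP₁, hΦ₁⟩ Z₂ ⟨P₂, hP₂, hΦ₂⟩ a b ha hb hab
  refine ⟨(a : ℂ) • P₁ + (b : ℂ) • P₂, ?_, ?_⟩
  · convert 𝒮.convex_pos hP₁ hP₂ ha hb hab using 1
    have hab' : (a : ℂ) + b = 1 := by exact_mod_cast hab
    rw [← Complex.coe_smul, ← Complex.coe_smul]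
    linear_combination (norm := module) hab' • -((ε : ℂ) • Matrix.diagonal fun _ => 𝒮.unit)
  · rw [← LinearMap.mapMatrix_apply, map_add, map_smul, map_smul, LinearMap.mapMatrix_apply,
      LinearMap.mapMatrix_apply, hΦ₁, hΦ₂]
    simp [Complex.coe_smul]

variable (ι) in
lemma absorbent_realLiftSet (hΦ : IsCPmap 𝒮 𝒯 Φ) (hsurj : Function.Surjective Φ) {ε : ℝ}
    (hε : 0 < ε) : Absorbent ℝ (realLiftSet 𝒮 Φ ι ε) := by
  refine absorbent_iff_eventually_nhdsNE_zero.2 fun Z => ?_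
  set P : Matrix ι ι V := ↑(ℜ ((ℜ Z : Matrix ι ι W).map (Function.surjInv hsurj)))
  have hP : P.map Φ = ℜ Z := by
    rw [hΦ.map_realPart, Matrix.map_map, Function.comp_surjInv, Matrix.map_id,
      selfAdjoint.realPart_coe]
  refine eventually_nhdsWithin_of_eventually_nhds ?_
  filter_upwards [𝒮.eventually_smul_add_unit_smul_mem_pos (X := P) (ℜ _).2 hε] with s hs
  refine ⟨(s : ℂ) • P, hs, ?_⟩
  rw [← LinearMap.mapMatrix_apply, map_smul, LinearMap.mapMatrix_apply, hP]
  simp [Complex.coe_smul]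

end Lifts

section Duality

variable {V W : Type}
variable [AddCommGroup V] [Module ℂ V] [StarAddMonoid V] [StarModule ℂ V]
variable [AddCommGroup W] [Module ℂ W] [StarAddMonoid W] [StarModule ℂ W]
variable {𝒮 : OpSys V} {𝒯 : OpSys W} {Φ : V →ₗ[ℂ] W}
variable {ι : Type} [Fintype ι] [DecidableEq ι]

lemma exists_separating_functional (hΦ : IsCPmap 𝒮 𝒯 Φ) (hsurj : Function.Surjective Φ)
    {ε : ℝ} (hε : 0 < ε) {Q : Matrix ι ι W} (hQ : IsSelfAdjoint Q)
    (hno : ∀ P, P + (ε : ℂ) • Matrix.diagonal (fun _ => 𝒮.unit) ∈ 𝒮.pos ι → P.map Φ ≠ Q) :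
    ∃ μ : Matrix ι ι W →ₗ[ℝ] ℝ, (∀ P ∈ 𝒮.pos ι, μ (P.map Φ) ≤ 0) ∧ 0 < μ Q := by
  set e := Matrix.diagonal fun _ : ι => 𝒮.unit
  have hQC : Q ∉ realLiftSet 𝒮 Φ ι ε := by
    rw [mem_realLiftSet_iff hQ]
    rintro ⟨P, hP, rfl⟩
    exact hno P hP rfl
  obtain ⟨μ, hμC, hμQ⟩ := Convex.exists_linearMap_le_one_le_of_notMem
    (convex_realLiftSet 𝒮 Φ ι ε) (absorbent_realLiftSet ι hΦ hsurj hε) hQC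
  refine ⟨μ, fun P hP => ?_, one_pos.trans_le hμQ⟩
  have hτ (τ : ℝ) (hτ : 0 < τ) : τ * μ (P.map Φ) ≤ 1 + ε * μ (e.map Φ) := by
    have hlift : (τ : ℂ) • P - (ε : ℂ) • e + (ε : ℂ) • e ∈ 𝒮.pos ι := by
      rw [sub_add_cancel]
      exact 𝒮.smul_mem_pos hτ.le hP
    have hle := hμC _ ((mem_realLiftSet_iff (hΦ.isSelfAdjoint_map
      (𝒮.isSelfAdjoint_of_add_unit_smul_mem_pos hlift))).2 ⟨_, hlift, rfl⟩)
    rw [← LinearMap.mapMatrix_apply, map_sub, map_smul, map_smul, Complex.coe_smul,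
      Complex.coe_smul, map_sub, map_smul, map_smul, LinearMap.mapMatrix_apply,
      LinearMap.mapMatrix_apply] at hle
    simp only [smul_eq_mul] at hle
    linarith
  by_contra! hpos
  have h := hτ ((|1 + ε * μ (e.map Φ)| + 1) / μ (P.map Φ)) (by positivity)
  rw [div_mul_cancel₀ _ hpos.ne'] at h
  linarith [le_abs_self (1 + ε * μ (e.map Φ))]

lemma IsCPmap.comp_mem_dualPos (hΦ : IsCPmap 𝒮 𝒯 Φ) {f : Matrix ι ι (DualV W)}
    (hf : f ∈ dualPos 𝒯.pos ι) : (Matrix.of fun i j => (f i j).comp Φ) ∈ dualPos 𝒮.pos ι :=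
  fun m _ _ X hX => hf m (X.map Φ) (hΦ m X hX)

lemma IsCOQuotientMap.mem_dualPos_of_comp (hΦ : IsCOQuotientMap 𝒮 𝒯 Φ)
    {f : Matrix ι ι (DualV W)} (hf : (Matrix.of fun i j => (f i j).comp Φ) ∈ dualPos 𝒮.pos ι) :
    f ∈ dualPos 𝒯.pos ι := by
  intro m _ _ Q hQ
  refine (hf m _ (𝒮.unit_pos m)).of_forall_add_smul fun ε hε => ?_
  obtain ⟨P, hP, rfl⟩ := hΦ.2.2 m Q hQ ε hε
  convert hf m _ hP using 1
  ext p q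
  simp [ampMat]

theorem IsCOQuotientMap.of_comp_mem_dualPos (hΦ : IsUCPmap 𝒮 𝒯 Φ)
    (hsurj : Function.Surjective Φ)
    (hdual : ∀ (ι : Type) [Fintype ι] [DecidableEq ι] (f : Matrix ι ι (DualV W)),
      (Matrix.of fun i j => (f i j).comp Φ) ∈ dualPos 𝒮.pos ι → f ∈ dualPos 𝒯.pos ι) :
    IsCOQuotientMap 𝒮 𝒯 Φ := by
  refine ⟨hΦ, hsurj, fun ι _ _ Q hQ ε hε => ?_⟩
  by_contra! hno
  have hQsa := 𝒯.isSelfAdjoint_of_mem_pos hQ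
  obtain ⟨μ, hμ, hμQ⟩ := exists_separating_functional hΦ.2 hsurj hε hQsa hno
  obtain ⟨L, hL, hLμ⟩ := exists_hermitian_extension μ
  have hf : (Matrix.of fun i j => (entryFunctionals (-L) i j).comp Φ) ∈ dualPos 𝒮.pos ι := by
    intro m _ _ X hX
    rw [ampMat_comp]
    refine posSemidef_ampMat_entryFunctionals (by simp [hL])
      (hΦ.2.isSelfAdjoint_map (𝒮.isSelfAdjoint_of_mem_pos hX)) fun α => ?_
    have hαX := 𝒮.pos_conj m ι α X hX
    rw [← mconj_map, LinearMap.neg_apply,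
      hLμ _ (hΦ.2.isSelfAdjoint_map (𝒮.isSelfAdjoint_of_mem_pos hαX))]
    exact_mod_cast neg_nonneg.2 (hμ _ hαX)
  have hLQ := apply_nonneg_of_posSemidef_ampMat_entryFunctionals (hdual ι _ hf ι Q hQ)
  rw [LinearMap.neg_apply, hLμ Q hQsa] at hLQ
  exact hμQ.not_ge (by exact_mod_cast neg_nonneg.1 hLQ)

end Duality

theorem quotient_iff_dual_embedding_general {V W : Type}
    [AddCommGroup V] [Module ℂ V] [StarAddMonoid V] [StarModule ℂ V]
    [AddCommGroup W] [Module ℂ W] [StarAddMonoid W] [StarModule ℂ W]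
    (𝒮 : OpSys V) (𝒯 : OpSys W)
    (Φ : V →ₗ[ℂ] W) (hucp : IsUCPmap 𝒮 𝒯 Φ) (hsurj : Function.Surjective Φ) :
    IsCOQuotientMap 𝒮 𝒯 Φ ↔
      ∀ (ι : Type) [Fintype ι] [DecidableEq ι] (f : Matrix ι ι (DualV W)),
        ((Matrix.of fun i j => (f i j).comp Φ) ∈ dualPos 𝒮.pos ι ↔
          f ∈ dualPos 𝒯.pos ι) :=
  ⟨fun hΦ _ _ _ _ => ⟨hΦ.mem_dualPos_of_comp, hucp.2.comp_mem_dualPos⟩,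
    fun hdual => .of_comp_mem_dualPos hucp hsurj fun ι _ _ f => (hdual ι f).1⟩

/-- **Theorem 6.1.** Let `S` and `T` be operator systems with complete norms and
`Φ : S → T` a unital completely positive surjection.  Then `Φ` is a complete order
quotient map iff the dual map `Φ* : T* → S*` is a complete order embedding, i.e.
for `f ∈ Mₙ(T*)`, `Φ*ₙ(f)` is completely positive iff `f` is completely positive. -/
theorem quotient_iff_dual_embedding {V W : Type}
    [AddCommGroup V] [Module ℂ V] [StarAddMonoid V] [StarModule ℂ V]
    [AddCommGroup W] [Module ℂ W] [StarAddMonoid W] [StarModule ℂ W]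
    (𝒮 : OpSys V) (𝒯 : OpSys W)
    (hScomp : 𝒮.CompleteNorms) (hTcomp : 𝒯.CompleteNorms)
    (Φ : V →ₗ[ℂ] W) (hucp : IsUCPmap 𝒮 𝒯 Φ) (hsurj : Function.Surjective Φ) :
    IsCOQuotientMap 𝒮 𝒯 Φ ↔
      ∀ (ι : Type) [Fintype ι] [DecidableEq ι] (f : Matrix ι ι (DualV W)),
        ((Matrix.of fun i j => (f i j).comp Φ) ∈ dualPos 𝒮.pos ι ↔
          f ∈ dualPos 𝒯.pos ι) :=
  quotient_iff_dual_embedding_general 𝒮 𝒯 Φ hucp hsurj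
end

section
/- Let V be a matrix ordered operator space and Ṽ = V ⊕ ℂ its Werner unitization. If T : V → W is a completely contractive, completely positive linear map between matrix ordered operator spaces, then the unitization T̃ : Ṽ → W̃ defined by T̃(x + λ·1) = T(x) + λ·1 is a unital completely positive map of operator systems. -/
open scoped TensorProduct Kronecker ComplexOrder Matrix

/-- A matrix ordered operator space, as raw data: matrix cones and matrix norms. -/
structure MatOrdData (V : Type) [AddCommGroup V] [Module ℂ V] [StarAddMonoid V]
    [StarModule ℂ V] : Type 1 where
  pos : ∀ (ι : Type) [Fintype ι] [DecidableEq ι], Set (Matrix ι ι V)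
  normLE : ∀ (ι κ : Type) [Fintype ι] [DecidableEq ι] [Fintype κ] [DecidableEq κ],
    Matrix ι κ V → ℝ → Prop

section WernerMap

variable {V W : Type} [AddCommGroup V] [Module ℂ V] [AddCommGroup W] [Module ℂ W]

theorem map_mconj (T : V →ₗ[ℂ] W) {m n : Type} [Fintype m] (α : Matrix n m ℂ)
    (Y : Matrix m m V) : (mconj α Y).map T = mconj α (Y.map T) := by
  ext i j
  simp [mconj, map_sum, map_smul]

/-- Positive contractive functionals on `Mₙ(W)` pull back along `T` to positive contractive
functionals on `Mₙ(V)`, and `T` commutes with the scalar conjugation in Werner's condition. -/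
theorem map_prodMap_mem_wernerPos
    {posV : ∀ (ι : Type) [Fintype ι] [DecidableEq ι], Set (Matrix ι ι V)}
    {normV : ∀ (ι κ : Type) [Fintype ι] [DecidableEq ι] [Fintype κ] [DecidableEq κ],
      Matrix ι κ V → ℝ → Prop}
    {posW : ∀ (ι : Type) [Fintype ι] [DecidableEq ι], Set (Matrix ι ι W)}
    {normW : ∀ (ι κ : Type) [Fintype ι] [DecidableEq ι] [Fintype κ] [DecidableEq κ],
      Matrix ι κ W → ℝ → Prop}
    (T : V →ₗ[ℂ] W) {ι : Type} [Fintype ι] [DecidableEq ι]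
    (hcp : ∀ X ∈ posV ι, X.map T ∈ posW ι)
    (hcc : ∀ (X : Matrix ι ι V) (r : ℝ), normV ι ι X r → normW ι ι (X.map T) r)
    {X : Matrix ι ι (V × ℂ)} (hX : X ∈ wernerPos posV normV ι) :
    X.map (LinearMap.prodMap T LinearMap.id) ∈ wernerPos posW normW ι := by
  obtain ⟨hscalar, hfunctional⟩ := hX
  refine ⟨hscalar, fun ε hε B hB hBB φ hφpos hφnorm => ?_⟩
  have hpos : ∀ g ∈ posV ι, 0 ≤ (φ.comp T.mapMatrix g).re ∧ (φ.comp T.mapMatrix g).im = 0 :=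
    fun g hg => hφpos _ (hcp g hg)
  have hnorm : ∀ (g : Matrix ι ι V) (r : ℝ), 0 ≤ r → normV ι ι g r →
      ‖φ.comp T.mapMatrix g‖ ≤ r :=
    fun g r hr hg => hφnorm _ r hr (hcc g r hg)
  have key := hfunctional ε hε B hB hBB (φ.comp T.mapMatrix) hpos hnorm
  rwa [LinearMap.comp_apply, LinearMap.mapMatrix_apply, map_mconj] at key

end WernerMap

theorem unitization_of_ccp_is_ucp_general {V W : Type}
    [AddCommGroup V] [Module ℂ V] [StarAddMonoid V] [StarModule ℂ V]
    [AddCommGroup W] [Module ℂ W] [StarAddMonoid W] [StarModule ℂ W]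
    (𝒱 : MatOrdData V) (𝒲 : MatOrdData W) (T : V →ₗ[ℂ] W)
    (hcc : ∀ (ι κ : Type) [Fintype ι] [DecidableEq ι] [Fintype κ] [DecidableEq κ]
      (X : Matrix ι κ V) (r : ℝ), 𝒱.normLE ι κ X r → 𝒲.normLE ι κ (X.map T) r)
    (hcp : ∀ (ι : Type) [Fintype ι] [DecidableEq ι],
      ∀ X ∈ 𝒱.pos ι, X.map T ∈ 𝒲.pos ι) :
    (LinearMap.prodMap T (LinearMap.id (R := ℂ) (M := ℂ)))
        ((0 : V), (1 : ℂ)) = ((0 : W), (1 : ℂ)) ∧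
    ∀ (ι : Type) [Fintype ι] [DecidableEq ι],
      ∀ X ∈ wernerPos 𝒱.pos 𝒱.normLE ι,
        X.map (LinearMap.prodMap T (LinearMap.id (R := ℂ) (M := ℂ))) ∈
          wernerPos 𝒲.pos 𝒲.normLE ι :=
  ⟨by simp, fun ι _ _ _ hX => map_prodMap_mem_wernerPos T (hcp ι) (hcc ι ι) hX⟩

/-- **Lemma (Werner).** If `T : V → W` is a completely contractive completely
positive map between matrix ordered operator spaces, then its unitization
`T̃ : Ṽ → W̃`, `x + λ1 ↦ T(x) + λ1`, is a unital completely positive map of the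
Werner unitizations. -/
theorem unitization_of_ccp_is_ucp {V W : Type}
    [AddCommGroup V] [Module ℂ V] [StarAddMonoid V] [StarModule ℂ V]
    [AddCommGroup W] [Module ℂ W] [StarAddMonoid W] [StarModule ℂ W]
    (𝒱 : MatOrdData V) (𝒲 : MatOrdData W) (T : V →ₗ[ℂ] W)
    (hstar : ∀ x, T (star x) = star (T x))
    (hcc : ∀ (ι κ : Type) [Fintype ι] [DecidableEq ι] [Fintype κ] [DecidableEq κ]
      (X : Matrix ι κ V) (r : ℝ), 𝒱.normLE ι κ X r → 𝒲.normLE ι κ (X.map T) r)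
    (hcp : ∀ (ι : Type) [Fintype ι] [DecidableEq ι],
      ∀ X ∈ 𝒱.pos ι, X.map T ∈ 𝒲.pos ι) :
    (LinearMap.prodMap T (LinearMap.id (R := ℂ) (M := ℂ)))
        ((0 : V), (1 : ℂ)) = ((0 : W), (1 : ℂ)) ∧
    ∀ (ι : Type) [Fintype ι] [DecidableEq ι],
      ∀ X ∈ wernerPos 𝒱.pos 𝒱.normLE ι,
        X.map (LinearMap.prodMap T (LinearMap.id (R := ℂ) (M := ℂ))) ∈
          wernerPos 𝒲.pos 𝒲.normLE ι :=
  unitization_of_ccp_is_ucp_general 𝒱 𝒲 T hcc hcp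
end
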